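/- Let n be a positive integer and let x, y be symmetric n×n complex matrices (xᵀ = x, yᵀ = y) such that I − x xᴴ and I − xᴴ x are (Hermitian) positive definite and I − xᴴ y is invertible. Set z = φ_x(y) = (I − x xᴴ)^{−1/2} (y − x) (I − xᴴ y)^{−1} (I − xᴴ x)^{1/2}, and assume I + z xᴴ is invertible. Then y = (I − x xᴴ)^{1/2} (I + z xᴴ)^{−1} (z + x) (I − xᴴ x)^{−1/2}. -/

import Mathlib

/-!
The map `w ↦ (w - x)(1 - xᴴ w)⁻¹` is inverted by `w ↦ (1 + w xᴴ)⁻¹(w + x)`, a purely ring-theoretic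
identity, and the square roots `A = (1 - x xᴴ)^{1/2}`, `B = (1 - xᴴ x)^{1/2}` only enter through
the intertwining relations `xᴴ A = B xᴴ` and `A x = x B`. These hold because `A` and `B` are values
of one polynomial (interpolating `√` on the union of the two finite spectra) at `1 - x xᴴ` and
`1 - xᴴ x`, which are themselves intertwined: `xᴴ (1 - x xᴴ) = (1 - xᴴ x) xᴴ`.
-/

open Matrix
open scoped ComplexOrder

/-- `Matrix.PosSemidef.sqrt` as it stood in Mathlib (December 2024); since removed. -/
noncomputable def Matrix.PosSemidef.sqrt {n : Type*} [Fintype n] [DecidableEq n] {𝕜 : Type*}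
    [RCLike 𝕜] {A : Matrix n n 𝕜} (hA : A.PosSemidef) : Matrix n n 𝕜 :=
  hA.1.eigenvectorUnitary.1 * diagonal ((↑) ∘ (√·) ∘ hA.1.eigenvalues) *
    (star hA.1.eigenvectorUnitary : Matrix n n 𝕜)

open scoped Ring

theorem semiconjBy_one_sub_mul {R : Type*} [Ring R] (a b : R) :
    SemiconjBy a (1 - b * a) (1 - a * b) := by
  simp only [SemiconjBy, mul_sub, sub_mul, mul_one, one_mul, mul_assoc]

open Polynomial in
theorem SemiconjBy.aeval {R A : Type*} [CommSemiring R] [Semiring A] [Algebra R A] {c a b : A}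
    (h : SemiconjBy c a b) (p : R[X]) : SemiconjBy c (aeval a p) (aeval b p) := by
  induction p using Polynomial.induction_on with
  | C r => simp only [aeval_C]; exact (Algebra.commutes r c).symm
  | add p q hp hq => simpa only [map_add] using hp.add_right hq
  | monomial k r ih =>
    simpa only [map_mul, map_pow, aeval_X, pow_succ, ← mul_assoc] using ih.mul_right h

theorem SemiconjBy.cfc {R A : Type*} {p : A → Prop} [Field R] [StarRing R] [MetricSpace R]
    [IsTopologicalSemiring R] [ContinuousStar R] [Ring A] [StarRing A] [TopologicalSpace A]
    [Algebra R A] [ContinuousFunctionalCalculus R A p] {c a b : A} (ha : p a) (hb : p b)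
    (hfa : (spectrum R a).Finite) (hfb : (spectrum R b).Finite) (h : SemiconjBy c a b)
    (f : R → R) : SemiconjBy c (cfc f a) (cfc f b) := by
  classical
  set s := (hfa.union hfb).toFinset
  set q : Polynomial R := Lagrange.interpolate s id f
  have hq : ∀ t ∈ s, q.eval t = f t := fun t ht =>
    Lagrange.eval_interpolate_at_node f Function.injective_id.injOn ht
  have hcfc : ∀ d, p d → spectrum R d ⊆ s → _root_.cfc f d = Polynomial.aeval d q :=
    fun d hd hds => by
      rw [← cfc_polynomial q d hd]
      exact cfc_congr fun t ht => (hq t (hds ht)).symm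
  rw [hcfc a ha (by simp [s]), hcfc b hb (by simp [s])]
  exact h.aeval q

namespace Matrix

variable {n 𝕜 : Type*} [Fintype n] [DecidableEq n] [RCLike 𝕜]

theorem PosSemidef.sqrt_eq_cfc {A : Matrix n n 𝕜} (hA : A.PosSemidef) :
    hA.sqrt = cfc Real.sqrt A := by
  rw [hA.1.cfc_eq, IsHermitian.cfc, Unitary.conjStarAlgAut_apply]
  rfl

open scoped MatrixOrder in
theorem PosDef.isUnit_sqrt {A : Matrix n n 𝕜} (hA : A.PosDef) : IsUnit hA.posSemidef.sqrt := by
  rw [hA.posSemidef.sqrt_eq_cfc, ← cfcₙ_eq_cfc, ← CFC.sqrt_eq_real_sqrt A hA.posSemidef.nonneg,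
    CFC.isUnit_sqrt_iff A hA.posSemidef.nonneg]
  exact hA.isUnit

theorem PosSemidef.semiconjBy_sqrt {A B c : Matrix n n 𝕜} (hA : A.PosSemidef)
    (hB : B.PosSemidef) (h : SemiconjBy c A B) : SemiconjBy c hA.sqrt hB.sqrt := by
  rw [hA.sqrt_eq_cfc, hB.sqrt_eq_cfc]
  exact h.cfc hA.1.isSelfAdjoint hB.1.isSelfAdjoint A.finite_real_spectrum B.finite_real_spectrum _

end Matrix

section Mobius

variable {R : Type*} [Ring R]

theorem one_add_mul_mul_eq_add_of_eq_mobius {a b k : Rˣ} {x x' y z : R}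
    (hxa : SemiconjBy x' a b) (hxb : SemiconjBy x b a) (hk : (k : R) = 1 - x' * y)
    (hz : z = ↑a⁻¹ * (y - x) * ↑k⁻¹ * b) :
    (1 + z * x') * (↑a⁻¹ * y * b) = z + x := by
  have hx'a : x' * ↑a⁻¹ = ↑b⁻¹ * x' := hxa.units_inv_right.eq
  have hx : x = ↑a⁻¹ * x * b := by
    rw [← hxb.units_inv_right.eq, Units.inv_mul_cancel_right]
  calc (1 + z * x') * (↑a⁻¹ * y * b)
      = ↑a⁻¹ * (y + (y - x) * ↑k⁻¹ * (x' * y)) * b := by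
        rw [hz]
        simp only [add_mul, mul_add, one_mul, mul_assoc]
        rw [← mul_assoc x' _ (y * b), hx'a]
        simp only [mul_assoc, Units.mul_inv_cancel_left]
    _ = ↑a⁻¹ * ((y - x) * ↑k⁻¹ + x) * b := by
        congr 2
        have hyx := Units.inv_mul_cancel_right (y - x) k
        rw [hk, mul_sub, mul_one, sub_eq_iff_eq_add] at hyx
        conv_rhs => rw [hyx]
        abel
    _ = z + x := by
        rw [hz, mul_add, add_mul, ← hx]
        simp only [mul_assoc]

theorem eq_mobiusInv_of_eq_mobius {a b x x' y z : R} (ha : IsUnit a) (hb : IsUnit b)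
    (hxa : SemiconjBy x' a b) (hxb : SemiconjBy x b a) (hk : IsUnit (1 - x' * y))
    (hz : z = a⁻¹ʳ * (y - x) * (1 - x' * y)⁻¹ʳ * b) (hzu : IsUnit (1 + z * x')) :
    y = a * (1 + z * x')⁻¹ʳ * (z + x) * b⁻¹ʳ := by
  obtain ⟨a, rfl⟩ := ha
  obtain ⟨b, rfl⟩ := hb
  obtain ⟨k, hk⟩ := hk
  rw [← hk, Ring.inverse_unit, Ring.inverse_unit] at hz
  rw [Ring.inverse_unit, ← one_add_mul_mul_eq_add_of_eq_mobius hxa hxb hk hz,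
    mul_assoc (a : R), Ring.inverse_mul_cancel_left _ _ hzu]
  simp only [mul_assoc, Units.mul_inv_cancel_left, Units.mul_inv, mul_one]

end Mobius

theorem siegel_disk_automorphism_inverse_general {n : ℕ}
    (x y : Matrix (Fin n) (Fin n) ℂ)
    (h1 : (1 - x * xᴴ).PosDef) (h2 : (1 - xᴴ * x).PosDef)
    (h4 : IsUnit (1 - xᴴ * y))
    (z : Matrix (Fin n) (Fin n) ℂ)
    (hz : z = (h1.posSemidef.sqrt)⁻¹ * (y - x) * (1 - xᴴ * y)⁻¹ * h2.posSemidef.sqrt)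
    (hzu : IsUnit (1 + z * xᴴ)) :
    y = h1.posSemidef.sqrt * (1 + z * xᴴ)⁻¹ * (z + x) * (h2.posSemidef.sqrt)⁻¹ := by
  simp only [nonsing_inv_eq_ringInverse] at hz ⊢
  exact eq_mobiusInv_of_eq_mobius h1.isUnit_sqrt h2.isUnit_sqrt
    (h1.posSemidef.semiconjBy_sqrt h2.posSemidef (semiconjBy_one_sub_mul xᴴ x))
    (h2.posSemidef.semiconjBy_sqrt h1.posSemidef (semiconjBy_one_sub_mul x xᴴ)) h4 hz hzu

/-- Proposition 6.2: the inverse of the Siegel-disk automorphism.  If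
`z = φ_x(y) = (I - x xᴴ)^{-1/2} (y - x) (I - xᴴ y)⁻¹ (I - xᴴ x)^{1/2}` and `I + z xᴴ` is
invertible, then `y = (I - x xᴴ)^{1/2} (I + z xᴴ)⁻¹ (z + x) (I - xᴴ x)^{-1/2}`. -/
theorem siegel_disk_automorphism_inverse {n : ℕ} (hn : 0 < n)
    (x y : Matrix (Fin n) (Fin n) ℂ)
    (hxs : xᵀ = x) (hys : yᵀ = y)
    (h1 : (1 - x * xᴴ).PosDef) (h2 : (1 - xᴴ * x).PosDef)
    (h4 : IsUnit (1 - xᴴ * y))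
    (z : Matrix (Fin n) (Fin n) ℂ)
    (hz : z = (h1.posSemidef.sqrt)⁻¹ * (y - x) * (1 - xᴴ * y)⁻¹ * h2.posSemidef.sqrt)
    (hzu : IsUnit (1 + z * xᴴ)) :
    y = h1.posSemidef.sqrt * (1 + z * xᴴ)⁻¹ * (z + x) * (h2.posSemidef.sqrt)⁻¹ :=
  siegel_disk_automorphism_inverse_general x y h1 h2 h4 z hz hzu
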